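/- arXiv:2001.08733 — 3 statements merged into one kernel-verified Lean document; each statement's English description precedes it below -/
import Mathlib

section
/- Let Γ : ℝ → ℝ be C¹ with a finite limit lim_{t→+∞} Γ'(t) t^m for some m > 1, let 0 < α ≤ m - 1, and let h(s) = s/(1-s)^{1/α} on [0,1) with inverse g. Then the limit as t → +∞ of Γ'(t)/g'(t) exists, i.e., the function s ↦ Γ(h(s)) extends to a continuously differentiable function on [0,1]. -/
/-!
With `p = 1 / α`, the inverse function theorem gives `g' t = 1 / h' (g t)`, so
`Γ' t / g' t = (Γ' t * t ^ m) * (h' s / h s ^ m)` with `s = g t → 1⁻`. Explicitly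
`h' s / h s ^ m = (1 - s) ^ (p * (m - 1) - 1) * (1 - s + p * s) / s ^ m`, which is continuous
up to `s = 1` because `p * (m - 1) ≥ 1`, i.e. `α ≤ m - 1`.
-/

open Real Filter Set Topology

noncomputable section

/-- The paper's `h` is `stretch (1 / α)`. -/
def stretch (p s : ℝ) : ℝ := s / (1 - s) ^ p

def stretchDeriv (p s : ℝ) : ℝ := (1 - s) ^ (-p - 1) * (1 - s + p * s)

end

theorem stretch_zero (p : ℝ) : stretch p 0 = 0 := by simp [stretch]

theorem hasDerivAt_stretch (p : ℝ) {s : ℝ} (hs : s < 1) :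
    HasDerivAt (stretch p) (stretchDeriv p s) s := by
  have h1s : 0 < 1 - s := sub_pos.2 hs
  have hpow : HasDerivAt (fun x => (1 - x) ^ (-p)) (-p * (1 - s) ^ (-p - 1) * -1) s :=
    (hasDerivAt_rpow_const (Or.inl h1s.ne')).comp s ((hasDerivAt_id s).const_sub 1)
  have heq : (fun x => x * (1 - x) ^ (-p)) =ᶠ[𝓝 s] stretch p := by
    filter_upwards [eventually_lt_nhds hs] with x hx
    rw [stretch, rpow_neg (sub_pos.2 hx).le, div_eq_mul_inv]
  refine (((hasDerivAt_id s).mul hpow).congr_of_eventuallyEq heq.symm).congr_deriv ?_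
  rw [stretchDeriv, show (1 - s) ^ (-p) = (1 - s) ^ (-p - 1) * (1 - s) by
    rw [← rpow_add_one h1s.ne', sub_add_cancel]]
  simp only [id]
  ring

theorem stretchDeriv_pos {p s : ℝ} (hp : 0 ≤ p) (hs : s ∈ Ico (0 : ℝ) 1) :
    0 < stretchDeriv p s := by
  have h1s : 0 < 1 - s := sub_pos.2 hs.2
  have := hs.1
  unfold stretchDeriv
  positivity

theorem strictMonoOn_stretch {p : ℝ} (hp : 0 ≤ p) : StrictMonoOn (stretch p) (Ico 0 1) := by
  refine strictMonoOn_of_deriv_pos (convex_Ico 0 1)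
    (fun s hs => (hasDerivAt_stretch p hs.2).continuousAt.continuousWithinAt) fun s hs => ?_
  rw [interior_Ico] at hs
  rw [(hasDerivAt_stretch p hs.2).deriv]
  exact stretchDeriv_pos hp (Ioo_subset_Ico_self hs)

theorem tendsto_stretch_nhdsLT_one {p : ℝ} (hp : 0 < p) :
    Tendsto (stretch p) (𝓝[<] 1) atTop := by
  have hden : Tendsto (fun s : ℝ => (1 - s) ^ p) (𝓝[<] 1) (𝓝[>] 0) := by
    refine tendsto_nhdsWithin_iff.2 ⟨?_, ?_⟩
    · have : ContinuousAt (fun s : ℝ => (1 - s) ^ p) 1 :=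
        (continuousAt_const.sub continuousAt_id).rpow_const (Or.inr hp.le)
      simpa [zero_rpow hp.ne'] using this.tendsto.mono_left nhdsWithin_le_nhds
    · filter_upwards [self_mem_nhdsWithin] with s hs
      exact rpow_pos_of_pos (sub_pos.2 hs) p
  exact (tendsto_nhdsWithin_of_tendsto_nhds tendsto_id).pos_mul_atTop one_pos
    (tendsto_inv_nhdsGT_zero.comp hden) |>.congr fun s => (div_eq_mul_inv _ _).symm

theorem surjOn_stretch {p : ℝ} (hp : 0 < p) : SurjOn (stretch p) (Ico 0 1) (Ici 0) := by
  intro t ht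
  obtain ⟨s₀, hts₀, hs₀⟩ := ((tendsto_stretch_nhdsLT_one hp).eventually_gt_atTop t).and
    (Ioo_mem_nhdsLT one_pos) |>.exists
  have hcont : ContinuousOn (stretch p) (Icc 0 s₀) := fun x hx =>
    (hasDerivAt_stretch p (hx.2.trans_lt hs₀.2)).continuousAt.continuousWithinAt
  obtain ⟨s, hs, rfl⟩ := intermediate_value_Icc hs₀.1.le hcont
    ⟨(stretch_zero p).symm ▸ ht, hts₀.le⟩
  exact ⟨s, ⟨hs.1, hs.2.trans_lt hs₀.2⟩, rfl⟩

theorem tendsto_stretchDeriv_div_rpow {p m : ℝ} (hpm : 1 ≤ p * (m - 1)) :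
    Tendsto (fun s => stretchDeriv p s / stretch p s ^ m) (𝓝[<] 1)
      (𝓝 ((0 : ℝ) ^ (p * (m - 1) - 1) * p)) := by
  have hcont : ContinuousAt
      (fun s : ℝ => (1 - s) ^ (p * (m - 1) - 1) * ((1 - s + p * s) / s ^ m)) 1 := by
    refine ((continuousAt_const.sub continuousAt_id).rpow_const (Or.inr (by linarith))).mul
      ((by fun_prop : ContinuousAt (fun s : ℝ => 1 - s + p * s) 1).div
        (continuousAt_id.rpow_const (Or.inl one_ne_zero)) (by simp))
  have hlim := hcont.tendsto.mono_left (nhdsWithin_le_nhds (s := Iio 1))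
  simp only [sub_self, one_rpow, zero_add, mul_one, div_one] at hlim
  refine hlim.congr' ?_
  filter_upwards [Ioo_mem_nhdsLT one_pos] with s hs
  have h1s : 0 < 1 - s := sub_pos.2 hs.2
  have hsm : s ^ m ≠ 0 := (rpow_pos_of_pos hs.1 m).ne'
  rw [stretchDeriv, stretch, div_rpow hs.1.le (rpow_nonneg h1s.le p), ← rpow_mul h1s.le,
    show p * (m - 1) - 1 = (-p - 1) + p * m by ring, rpow_add h1s]
  field_simp

section Inverse

variable {p : ℝ} {g : ℝ → ℝ}

theorem inverse_stretch_mem_Ico (hp : 0 < p) (hhg : ∀ s ∈ Ico (0 : ℝ) 1, g (stretch p s) = s)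
    {t : ℝ} (ht : 0 ≤ t) : g t ∈ Ico 0 1 := by
  obtain ⟨s, hs, rfl⟩ := surjOn_stretch hp ht
  rwa [hhg s hs]

theorem inverse_stretch_mem_Ioo (hp : 0 < p) (hgh : ∀ t ≥ (0 : ℝ), stretch p (g t) = t)
    (hhg : ∀ s ∈ Ico (0 : ℝ) 1, g (stretch p s) = s) {t : ℝ} (ht : 0 < t) : g t ∈ Ioo 0 1 := by
  obtain ⟨hgt0, hgt1⟩ := inverse_stretch_mem_Ico hp hhg ht.le
  refine ⟨hgt0.lt_of_ne fun h0 => ht.ne ?_, hgt1⟩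
  rw [← hgh t ht.le, ← h0, stretch_zero]

theorem monotoneOn_inverse_stretch (hp : 0 < p) (hgh : ∀ t ≥ (0 : ℝ), stretch p (g t) = t)
    (hhg : ∀ s ∈ Ico (0 : ℝ) 1, g (stretch p s) = s) : MonotoneOn g (Ici 0) := by
  intro t ht u hu htu
  rwa [← (strictMonoOn_stretch hp.le).le_iff_le (inverse_stretch_mem_Ico hp hhg ht)
    (inverse_stretch_mem_Ico hp hhg hu), hgh t ht, hgh u hu]

theorem continuousAt_inverse_stretch (hp : 0 < p) (hgh : ∀ t ≥ (0 : ℝ), stretch p (g t) = t)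
    (hhg : ∀ s ∈ Ico (0 : ℝ) 1, g (stretch p s) = s) {t : ℝ} (ht : 0 < t) :
    ContinuousAt g t := by
  refine continuousAt_of_monotoneOn_of_image_mem_nhds
    ((monotoneOn_inverse_stretch hp hgh hhg).mono Ioi_subset_Ici_self) (Ioi_mem_nhds ht)
    (mem_of_superset (isOpen_Ioo.mem_nhds (inverse_stretch_mem_Ioo hp hgh hhg ht)) fun s hs => ?_)
  refine ⟨stretch p s, ?_, hhg s (Ioo_subset_Ico_self hs)⟩
  rw [mem_Ioi, ← stretch_zero p]
  exact strictMonoOn_stretch hp.le (left_mem_Ico.2 one_pos) (Ioo_subset_Ico_self hs) hs.1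

theorem tendsto_inverse_stretch_atTop (hp : 0 < p) (hgh : ∀ t ≥ (0 : ℝ), stretch p (g t) = t)
    (hhg : ∀ s ∈ Ico (0 : ℝ) 1, g (stretch p s) = s) : Tendsto g atTop (𝓝[<] 1) := by
  refine tendsto_nhdsWithin_iff.2 ⟨tendsto_order.2 ⟨fun b hb => ?_, fun b hb => ?_⟩, ?_⟩
  · have hb' : max b 0 ∈ Ico (0 : ℝ) 1 := ⟨le_max_right _ _, max_lt hb one_pos⟩
    filter_upwards [eventually_gt_atTop (stretch p (max b 0))] with t ht
    have ht0 : 0 ≤ t := (stretch_zero p ▸ (strictMonoOn_stretch hp.le).monotoneOn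
      (left_mem_Ico.2 one_pos) hb' hb'.1).trans ht.le
    rw [← hgh t ht0, (strictMonoOn_stretch hp.le).lt_iff_lt hb'
      (inverse_stretch_mem_Ico hp hhg ht0)] at ht
    exact (le_max_left b 0).trans_lt ht
  · filter_upwards [eventually_ge_atTop 0] with t ht
    exact (inverse_stretch_mem_Ico hp hhg ht).2.trans hb
  · filter_upwards [eventually_ge_atTop 0] with t ht
    exact (inverse_stretch_mem_Ico hp hhg ht).2

theorem hasDerivAt_inverse_stretch (hp : 0 < p) (hgh : ∀ t ≥ (0 : ℝ), stretch p (g t) = t)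
    (hhg : ∀ s ∈ Ico (0 : ℝ) 1, g (stretch p s) = s) {t : ℝ} (ht : 0 < t) :
    HasDerivAt g (stretchDeriv p (g t))⁻¹ t :=
  (hasDerivAt_stretch p (inverse_stretch_mem_Ico hp hhg ht.le).2).of_local_left_inverse
    (continuousAt_inverse_stretch hp hgh hhg ht)
    (stretchDeriv_pos hp.le (inverse_stretch_mem_Ico hp hhg ht.le)).ne'
    (eventually_gt_nhds ht |>.mono fun u hu => hgh u hu.le)

end Inverse

theorem stmt16_general (Γ : ℝ → ℝ) (m : ℝ)
    (L : ℝ) (hL : Tendsto (fun t => deriv Γ t * t ^ m) atTop (nhds L))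
    (α : ℝ) (hα : 0 < α) (hαm : α ≤ m - 1)
    (h g : ℝ → ℝ) (hh : ∀ s, h s = s / (1 - s) ^ (1 / α))
    (hgh : ∀ t ≥ (0 : ℝ), h (g t) = t)
    (hhg : ∀ s ∈ Set.Ico (0 : ℝ) 1, g (h s) = s) :
    ∃ M : ℝ, Tendsto (fun t => deriv Γ t / deriv g t) atTop (nhds M) := by
  obtain rfl : h = stretch (1 / α) := funext hh
  have hp : 0 < 1 / α := one_div_pos.2 hα
  have hpm : 1 ≤ 1 / α * (m - 1) := by rwa [one_div_mul_eq_div, one_le_div hα]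
  have hratio : Tendsto (fun t => stretchDeriv (1 / α) (g t) / t ^ m) atTop
      (𝓝 ((0 : ℝ) ^ (1 / α * (m - 1) - 1) * (1 / α))) :=
    ((tendsto_stretchDeriv_div_rpow hpm).comp (tendsto_inverse_stretch_atTop hp hgh hhg)).congr'
      (eventually_ge_atTop 0 |>.mono fun t ht => by simp only [Function.comp_apply, hgh t ht])
  refine ⟨_, (hL.mul hratio).congr' ?_⟩
  filter_upwards [eventually_gt_atTop 0] with t ht
  rw [(hasDerivAt_inverse_stretch hp hgh hhg ht).deriv, div_inv_eq_mul,
    mul_assoc, mul_div_cancel₀ _ (rpow_pos_of_pos ht m).ne']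

theorem stmt16 (Γ : ℝ → ℝ) (hΓ : ContDiff ℝ 1 Γ) (m : ℝ) (hm : 1 < m)
    (L : ℝ) (hL : Tendsto (fun t => deriv Γ t * t ^ m) atTop (nhds L))
    (α : ℝ) (hα : 0 < α) (hαm : α ≤ m - 1)
    (h g : ℝ → ℝ) (hh : ∀ s, h s = s / (1 - s) ^ (1 / α))
    (hgh : ∀ t ≥ (0 : ℝ), h (g t) = t)
    (hhg : ∀ s ∈ Set.Ico (0 : ℝ) 1, g (h s) = s) :
    ∃ M : ℝ, Tendsto (fun t => deriv Γ t / deriv g t) atTop (nhds M) :=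
  stmt16_general Γ m L hL α hα hαm h g hh hgh hhg
end

section
/- Consider the two-dimensional system ẏ = βy + f₁(y,ζ), ζ̇ = αζ + f₂(y,ζ) where 0 < α < β and f₁, f₂ are Lipschitz with Lipschitz constant ρ and f₁(0,0)=f₂(0,0)=0. If ρ < (β-α)/4, then along any two solutions (y₁,ζ₁), (y₂,ζ₂) remaining in the domain, if |y₁(0)-y₂(0)| ≥ |ζ₁(0)-ζ₂(0)| then |y₁(t)-y₂(t)| ≥ |ζ₁(t)-ζ₂(t)| for all t ≥ 0 for which both solutions are defined. -/
/-!
Write `u = y₁ - y₂` and `v = ζ₁ - ζ₂`. Inside the complementary cone `|u| ≤ |v|`, the Lipschitz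
bounds on the `fᵢ` and the spectral gap `β - α ≥ 4ρ` give
`d/dt (v² - u²) ≤ (2α + 8ρ) (v² - u²)`. A function that starts nonpositive and grows at most
exponentially while it is positive stays nonpositive, so `v² - u² ≤ 0` for all time.
-/

open Real Set

lemma nonpos_of_hasDerivAt_le_mul_of_pos {φ φ' : ℝ → ℝ} {K a b : ℝ}
    (hφ : ∀ t ∈ Icc a b, HasDerivAt φ (φ' t) t) (ha : φ a ≤ 0)
    (hK : ∀ t ∈ Icc a b, 0 < φ t → φ' t ≤ K * φ t) :
    ∀ t ∈ Icc a b, φ t ≤ 0 := by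
  intro t ht
  refine le_of_forall_gt_imp_ge_of_dense fun ε hε => ?_
  -- Fence `φ` by `ε e^{(K+1)(s-t)}`, which equals `ε` at `s = t` and grows strictly faster.
  set B : ℝ → ℝ := fun s => ε * exp ((K + 1) * (s - t))
  have hB : ∀ s, HasDerivAt B ((K + 1) * B s) s := fun s =>
    ((((hasDerivAt_id' s).sub_const t).const_mul (K + 1)).exp.const_mul ε).congr_deriv
      (by simp only [B]; ring)
  have hBpos : ∀ s, 0 < B s := fun s => by positivity
  have hfence := image_le_of_deriv_right_lt_deriv_boundary
    (fun s hs => (hφ s hs).continuousAt.continuousWithinAt)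
    (fun s hs => (hφ s (Ico_subset_Icc_self hs)).hasDerivWithinAt)
    (ha.trans (hBpos a).le) hB
    (fun s hs hφB => by
      have := hK s (Ico_subset_Icc_self hs) (hφB ▸ hBpos s)
      rw [hφB] at this
      linarith [hBpos s])
    ht
  simpa [B] using hfence

lemma sq_sub_sq_deriv_le {α β ρ u v g₁ g₂ : ℝ} (hρ : 0 ≤ ρ) (hgap : 4 * ρ ≤ β - α)
    (hg₁ : |g₁| ≤ ρ * (|u| + |v|)) (hg₂ : |g₂| ≤ ρ * (|u| + |v|)) (huv : |u| ≤ |v|) :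
    2 * v * (α * v + g₂) - 2 * u * (β * u + g₁) ≤ (2 * α + 8 * ρ) * (v ^ 2 - u ^ 2) := by
  have hvg₂ : v * g₂ ≤ |v| * (ρ * (|u| + |v|)) := calc
    v * g₂ ≤ |v| * |g₂| := (le_abs_self _).trans (abs_mul v g₂).le
    _ ≤ |v| * (ρ * (|u| + |v|)) := by gcongr
  have hug₁ : -(u * g₁) ≤ |u| * (ρ * (|u| + |v|)) := calc
    -(u * g₁) ≤ |u| * |g₁| := (neg_le_abs _).trans (abs_mul u g₁).le
    _ ≤ |u| * (ρ * (|u| + |v|)) := by gcongr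
  -- The remaining slack is `2ρ (3|v| + |u|)(|v| - |u|) + 2 (β - α - 4ρ) u²`.
  nlinarith [mul_nonneg (mul_nonneg hρ (sub_nonneg.2 huv))
      (by positivity : (0 : ℝ) ≤ 3 * |v| + |u|),
    mul_nonneg (sq_nonneg |u|) (sub_nonneg.2 hgap), sq_abs u, sq_abs v]

theorem stmt17_general (α β ρ T : ℝ) (hρ : 0 < ρ)
    (hρ4 : 4 * ρ < β - α)
    (f₁ f₂ : ℝ × ℝ → ℝ)
    (hf₁ : ∀ p q : ℝ × ℝ, |f₁ p - f₁ q| ≤ ρ * (|p.1 - q.1| + |p.2 - q.2|))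
    (hf₂ : ∀ p q : ℝ × ℝ, |f₂ p - f₂ q| ≤ ρ * (|p.1 - q.1| + |p.2 - q.2|))
    (y₁ ζ₁ y₂ ζ₂ : ℝ → ℝ)
    (hy₁ : ∀ t ∈ Set.Icc 0 T, HasDerivAt y₁ (β * y₁ t + f₁ (y₁ t, ζ₁ t)) t)
    (hζ₁ : ∀ t ∈ Set.Icc 0 T, HasDerivAt ζ₁ (α * ζ₁ t + f₂ (y₁ t, ζ₁ t)) t)
    (hy₂ : ∀ t ∈ Set.Icc 0 T, HasDerivAt y₂ (β * y₂ t + f₁ (y₂ t, ζ₂ t)) t)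
    (hζ₂ : ∀ t ∈ Set.Icc 0 T, HasDerivAt ζ₂ (α * ζ₂ t + f₂ (y₂ t, ζ₂ t)) t)
    (h0 : |ζ₁ 0 - ζ₂ 0| ≤ |y₁ 0 - y₂ 0|) :
    ∀ t ∈ Set.Icc 0 T, |ζ₁ t - ζ₂ t| ≤ |y₁ t - y₂ t| := by
  set u : ℝ → ℝ := fun t => y₁ t - y₂ t
  set v : ℝ → ℝ := fun t => ζ₁ t - ζ₂ t
  set g₁ : ℝ → ℝ := fun t => f₁ (y₁ t, ζ₁ t) - f₁ (y₂ t, ζ₂ t)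
  set g₂ : ℝ → ℝ := fun t => f₂ (y₁ t, ζ₁ t) - f₂ (y₂ t, ζ₂ t)
  have hcone : ∀ t ∈ Icc 0 T,
      HasDerivAt (fun s => v s ^ 2 - u s ^ 2)
        (2 * v t * (α * v t + g₂ t) - 2 * u t * (β * u t + g₁ t)) t := fun t ht => by
    have hu : HasDerivAt u (β * u t + g₁ t) t :=
      ((hy₁ t ht).sub (hy₂ t ht)).congr_deriv (by simp only [u, g₁]; ring)
    have hv : HasDerivAt v (α * v t + g₂ t) t :=
      ((hζ₁ t ht).sub (hζ₂ t ht)).congr_deriv (by simp only [v, g₂]; ring)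
    exact ((hv.pow 2).sub (hu.pow 2)).congr_deriv (by norm_num)
  have hgrowth : ∀ t ∈ Icc 0 T, 0 < v t ^ 2 - u t ^ 2 →
      2 * v t * (α * v t + g₂ t) - 2 * u t * (β * u t + g₁ t)
        ≤ (2 * α + 8 * ρ) * (v t ^ 2 - u t ^ 2) := fun t _ hpos =>
    sq_sub_sq_deriv_le hρ.le hρ4.le (by simpa using hf₁ (y₁ t, ζ₁ t) (y₂ t, ζ₂ t))
      (by simpa using hf₂ (y₁ t, ζ₁ t) (y₂ t, ζ₂ t)) (sq_le_sq.1 (sub_nonneg.1 hpos.le))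
  have hstart : v 0 ^ 2 - u 0 ^ 2 ≤ 0 := sub_nonpos.2 (sq_le_sq.2 h0)
  intro t ht
  exact sq_le_sq.1 (sub_nonpos.1 (nonpos_of_hasDerivAt_le_mul_of_pos hcone hstart hgrowth t ht))

theorem stmt17 (α β ρ T : ℝ) (hα : 0 < α) (hαβ : α < β) (hρ : 0 < ρ)
    (hρ4 : 4 * ρ < β - α)
    (f₁ f₂ : ℝ × ℝ → ℝ) (hf₁0 : f₁ (0, 0) = 0) (hf₂0 : f₂ (0, 0) = 0)
    (hf₁ : ∀ p q : ℝ × ℝ, |f₁ p - f₁ q| ≤ ρ * (|p.1 - q.1| + |p.2 - q.2|))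
    (hf₂ : ∀ p q : ℝ × ℝ, |f₂ p - f₂ q| ≤ ρ * (|p.1 - q.1| + |p.2 - q.2|))
    (y₁ ζ₁ y₂ ζ₂ : ℝ → ℝ)
    (hy₁ : ∀ t ∈ Set.Icc 0 T, HasDerivAt y₁ (β * y₁ t + f₁ (y₁ t, ζ₁ t)) t)
    (hζ₁ : ∀ t ∈ Set.Icc 0 T, HasDerivAt ζ₁ (α * ζ₁ t + f₂ (y₁ t, ζ₁ t)) t)
    (hy₂ : ∀ t ∈ Set.Icc 0 T, HasDerivAt y₂ (β * y₂ t + f₁ (y₂ t, ζ₂ t)) t)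
    (hζ₂ : ∀ t ∈ Set.Icc 0 T, HasDerivAt ζ₂ (α * ζ₂ t + f₂ (y₂ t, ζ₂ t)) t)
    (h0 : |ζ₁ 0 - ζ₂ 0| ≤ |y₁ 0 - y₂ 0|) :
    ∀ t ∈ Set.Icc 0 T, |ζ₁ t - ζ₂ t| ≤ |y₁ t - y₂ t| :=
  stmt17_general α β ρ T hρ hρ4 f₁ f₂ hf₁ hf₂ y₁ ζ₁ y₂ ζ₂ hy₁ hζ₁ hy₂ hζ₂ h0
end

section
/- Under the assumptions of the cone invariance lemma (0 < α < β, Lipschitz constant ρ with 4ρ < β - α), if additionally |Δy(t)| ≥ |Δζ(t)| holds for all t ∈ [0,T], then |Δy(t)| ≥ |Δy(0)| e^{(β - 2ρ)t} for all t ∈ [0,T]. -/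
open Real Set

/-! In the cone `|Δζ| ≤ |Δy|` the Lipschitz perturbation in the `y`-equation is at most
`2ρ|Δy|`, so `(Δy²)' ≥ 2(β - 2ρ) Δy²`; the integrating factor makes `Δy² e^{-2(β - 2ρ)t}`
nondecreasing, which is the claimed growth after taking square roots. -/

theorem abs_mul_exp_le_abs_of_mul_deriv {g g' : ℝ → ℝ} {η a b : ℝ}
    (hg : ∀ t ∈ Icc a b, HasDerivAt g (g' t) t)
    (hgrowth : ∀ t ∈ Icc a b, η * g t ^ 2 ≤ g t * g' t) :
    ∀ t ∈ Icc a b, |g a| * exp (η * (t - a)) ≤ |g t| := by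
  set u : ℝ → ℝ := fun t => g t ^ 2 * exp (-(2 * η) * t)
  have hu : ∀ t ∈ Icc a b, HasDerivAt u
      (2 * exp (-(2 * η) * t) * (g t * g' t - η * g t ^ 2)) t := by
    intro t ht
    have hexp := ((hasDerivAt_id t).const_mul (-(2 * η))).exp
    refine (((hg t ht).pow 2).mul hexp).congr_deriv ?_
    simp only [id, Pi.pow_apply]
    ring
  have hmono : MonotoneOn u (Icc a b) := by
    refine monotoneOn_of_hasDerivWithinAt_nonneg (convex_Icc a b)
      (fun t ht => (hu t ht).continuousAt.continuousWithinAt)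
      (fun t ht => (hu t (interior_subset ht)).hasDerivWithinAt) fun t ht => ?_
    have : 0 ≤ g t * g' t - η * g t ^ 2 := sub_nonneg.2 (hgrowth t (interior_subset ht))
    positivity
  intro t ht
  have hut : u a ≤ u t := hmono (left_mem_Icc.2 (ht.1.trans ht.2)) ht ht.1
  have hsq : (|g a| * exp (η * (t - a))) ^ 2 ≤ |g t| ^ 2 := by
    have hsplit : exp (η * (t - a)) ^ 2 = exp (-(2 * η) * a) * exp (2 * η * t) := by
      rw [← exp_nat_mul, ← exp_add]
      ring_nf
    have hcancel : exp (-(2 * η) * t) * exp (2 * η * t) = 1 := by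
      rw [← exp_add]
      simp
    calc (|g a| * exp (η * (t - a))) ^ 2 = u a * exp (2 * η * t) := by
          rw [mul_pow, sq_abs, hsplit]
          ring
      _ ≤ u t * exp (2 * η * t) := by gcongr
      _ = |g t| ^ 2 := by
          rw [mul_assoc, hcancel, mul_one, sq_abs]
  exact (sq_le_sq₀ (by positivity) (abs_nonneg _)).1 hsq

theorem sub_mul_sq_le_mul_add_of_abs_le {β c x d : ℝ} (hd : |d| ≤ c * |x|) :
    (β - c) * x ^ 2 ≤ x * (β * x + d) := by
  have hxd : |x * d| ≤ c * x ^ 2 := by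
    rw [abs_mul, ← sq_abs x]
    nlinarith [abs_nonneg x]
  nlinarith [neg_abs_le (x * d)]

theorem stmt18_general (β ρ T : ℝ) (hρ : 0 < ρ)
    (f₁ : ℝ × ℝ → ℝ)
    (hf₁ : ∀ p q : ℝ × ℝ, |f₁ p - f₁ q| ≤ ρ * (|p.1 - q.1| + |p.2 - q.2|))
    (y₁ ζ₁ y₂ ζ₂ : ℝ → ℝ)
    (hy₁ : ∀ t ∈ Set.Icc 0 T, HasDerivAt y₁ (β * y₁ t + f₁ (y₁ t, ζ₁ t)) t)
    (hy₂ : ∀ t ∈ Set.Icc 0 T, HasDerivAt y₂ (β * y₂ t + f₁ (y₂ t, ζ₂ t)) t)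
    (hcone : ∀ t ∈ Set.Icc 0 T, |ζ₁ t - ζ₂ t| ≤ |y₁ t - y₂ t|) :
    ∀ t ∈ Set.Icc 0 T,
      |y₁ 0 - y₂ 0| * Real.exp ((β - 2 * ρ) * t) ≤ |y₁ t - y₂ t| := by
  have hgrowth : ∀ t ∈ Icc 0 T, (β - 2 * ρ) * (y₁ t - y₂ t) ^ 2 ≤
      (y₁ t - y₂ t) * ((β * y₁ t + f₁ (y₁ t, ζ₁ t)) - (β * y₂ t + f₁ (y₂ t, ζ₂ t))) := by
    intro t ht
    have hlip : |f₁ (y₁ t, ζ₁ t) - f₁ (y₂ t, ζ₂ t)| ≤ 2 * ρ * |y₁ t - y₂ t| :=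
      calc _ ≤ ρ * (|y₁ t - y₂ t| + |ζ₁ t - ζ₂ t|) := hf₁ _ _
        _ ≤ ρ * (|y₁ t - y₂ t| + |y₁ t - y₂ t|) := by gcongr ρ * (_ + ?_); exact hcone t ht
        _ = 2 * ρ * |y₁ t - y₂ t| := by ring
    calc _ ≤ (y₁ t - y₂ t) * (β * (y₁ t - y₂ t) + (f₁ (y₁ t, ζ₁ t) - f₁ (y₂ t, ζ₂ t))) :=
          sub_mul_sq_le_mul_add_of_abs_le hlip
      _ = _ := by ring
  intro t ht
  simpa using abs_mul_exp_le_abs_of_mul_deriv (fun s hs => (hy₁ s hs).sub (hy₂ s hs))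
    hgrowth t ht

theorem stmt18 (α β ρ T : ℝ) (hα : 0 < α) (hαβ : α < β) (hρ : 0 < ρ)
    (hρ4 : 4 * ρ < β - α)
    (f₁ f₂ : ℝ × ℝ → ℝ) (hf₁0 : f₁ (0, 0) = 0) (hf₂0 : f₂ (0, 0) = 0)
    (hf₁ : ∀ p q : ℝ × ℝ, |f₁ p - f₁ q| ≤ ρ * (|p.1 - q.1| + |p.2 - q.2|))
    (hf₂ : ∀ p q : ℝ × ℝ, |f₂ p - f₂ q| ≤ ρ * (|p.1 - q.1| + |p.2 - q.2|))
    (y₁ ζ₁ y₂ ζ₂ : ℝ → ℝ)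
    (hy₁ : ∀ t ∈ Set.Icc 0 T, HasDerivAt y₁ (β * y₁ t + f₁ (y₁ t, ζ₁ t)) t)
    (hζ₁ : ∀ t ∈ Set.Icc 0 T, HasDerivAt ζ₁ (α * ζ₁ t + f₂ (y₁ t, ζ₁ t)) t)
    (hy₂ : ∀ t ∈ Set.Icc 0 T, HasDerivAt y₂ (β * y₂ t + f₁ (y₂ t, ζ₂ t)) t)
    (hζ₂ : ∀ t ∈ Set.Icc 0 T, HasDerivAt ζ₂ (α * ζ₂ t + f₂ (y₂ t, ζ₂ t)) t)
    (hcone : ∀ t ∈ Set.Icc 0 T, |ζ₁ t - ζ₂ t| ≤ |y₁ t - y₂ t|) :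
    ∀ t ∈ Set.Icc 0 T,
      |y₁ 0 - y₂ 0| * Real.exp ((β - 2 * ρ) * t) ≤ |y₁ t - y₂ t| :=
  stmt18_general β ρ T hρ f₁ hf₁ y₁ ζ₁ y₂ ζ₂ hy₁ hy₂ hcone
end
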